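/- arXiv:quant-ph/0011049 — 5 statements merged into one kernel-verified Lean document; each statement's English description precedes it below -/
import Mathlib

section
/- Deterministic Sampling Theorem: Let p be an aperiodic string of length m ≥ 2, and consider the ⌈m/2⌉ copies of p shifted by 0, 1, ..., ⌈m/2⌉-1 positions. Then there exists a copy index f and a set S of at most ⌈log₂⌈m/2⌉⌉ absolute positions, each covered by copy f, such that: for every text t, if copy f of p agrees with t on all positions in S, then every copy g ≠ f disagrees with t at some position covered by copy g. -/
/-!
Copies `a < b` of `p` with `b - a ≤ m/2` disagree somewhere on their overlap, because `p` has
no period `b - a`. Hence any set of at least two copies contains two (its extreme ones) that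
disagree at a position covered by all of them. Splitting the set at such a position by the
character read there, one side has at most half the copies, and every copy outside that side
disagrees at this position with every copy inside it. Recursing into the smaller side halves
the number of candidates with each sampled position, so from `n` candidates a single copy `f`
survives after `⌈log₂ n⌉` positions, and every other copy was eliminated at a position where
it disagrees with `f`.
-/

def Aperiodic {α : Type*} {m : ℕ} (p : Fin m → α) : Prop :=
  ∀ d, 1 ≤ d → d ≤ m / 2 → ∃ k, ∃ hk : k < m, d ≤ k ∧ p ⟨k, hk⟩ ≠ p ⟨k - d, by omega⟩

lemma Finset.exists_separated_subset_two_mul_card_le {ι β : Type*} (A : Finset ι) (φ : ι → β)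
    {g h : ι} (hg : g ∈ A) (hh : h ∈ A) (hgh : φ g ≠ φ h) :
    ∃ B ⊆ A, B.Nonempty ∧ 2 * B.card ≤ A.card ∧ ∀ f ∈ B, ∀ g ∈ A, g ∉ B → φ g ≠ φ f := by
  classical
  have hsum := A.card_filter_add_card_filter_not (fun x => φ x = φ g)
  rcases le_total (A.filter (fun x => φ x = φ g)).card (A.filter (fun x => ¬φ x = φ g)).card
    with hle | hle
  · refine ⟨A.filter (fun x => φ x = φ g), filter_subset _ A, ⟨g, by simp [hg]⟩, by omega, ?_⟩
    intro f hf x hx hxB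
    simp only [mem_filter] at hf hxB
    rw [hf.2]
    exact fun hx' => hxB ⟨hx, hx'⟩
  · refine ⟨A.filter (fun x => ¬φ x = φ g), filter_subset _ A, ⟨h, by simp [hh, Ne.symm hgh]⟩,
      by omega, ?_⟩
    intro f hf x hx hxB
    simp only [mem_filter, not_and, not_not] at hf hxB
    rw [hxB hx]
    exact Ne.symm hf.2

lemma Nat.clog_two_add_one_le {k n : ℕ} (hk : 2 * k ≤ n) (hn : 2 ≤ n) :
    Nat.clog 2 k + 1 ≤ Nat.clog 2 n := by
  rw [Nat.clog_of_two_le one_lt_two hn]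
  exact Nat.add_le_add_right (Nat.clog_mono_right 2 (by omega)) 1

/-- `w i k = some a` means that the `i`-th partial string has the character `a` at position `k`;
`none` means that it does not cover `k`. -/
theorem exists_deterministic_sample {ι κ α : Type*} (w : ι → κ → Option α) (A : Finset ι)
    (hA : A.Nonempty)
    (hsplit : ∀ B ⊆ A, 1 < B.card →
      ∃ k, (∀ g ∈ B, w g k ≠ none) ∧ ∃ g ∈ B, ∃ h ∈ B, w g k ≠ w h k) :
    ∃ f ∈ A, ∃ S : Finset κ, S.card ≤ Nat.clog 2 A.card ∧ (∀ k ∈ S, w f k ≠ none) ∧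
      ∀ g ∈ A, g ≠ f → ∃ k ∈ S, w g k ≠ none ∧ w g k ≠ w f k := by
  classical
  induction hn : A.card using Nat.strong_induction_on generalizing A with
  | _ n ih =>
  rcases le_or_gt n 1 with hn1 | hn1
  · obtain ⟨f, hf⟩ := hA
    refine ⟨f, hf, ∅, by simp, by simp, fun g hg hgf => absurd ?_ hgf⟩
    exact Finset.card_le_one.mp (hn ▸ hn1) g hg f hf
  obtain ⟨k, hcov, g, hg, h, hh, hgh⟩ := hsplit A subset_rfl (hn ▸ hn1)
  obtain ⟨B, hBA, hB, hBcard, hsep⟩ :=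
    A.exists_separated_subset_two_mul_card_le (w · k) hg hh hgh
  obtain ⟨f, hfB, S, hScard, hScov, hSsep⟩ :=
    ih B.card (by omega) B hB (fun C hC => hsplit C (hC.trans hBA)) rfl
  refine ⟨f, hBA hfB, insert k S, ?_, ?_, ?_⟩
  · calc (insert k S).card ≤ S.card + 1 := Finset.card_insert_le k S
      _ ≤ Nat.clog 2 B.card + 1 := by omega
      _ ≤ Nat.clog 2 n := Nat.clog_two_add_one_le (by omega) (by omega)
  · simpa using ⟨hcov f (hBA hfB), hScov⟩
  · intro x hx hxf
    by_cases hxB : x ∈ B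
    · obtain ⟨k', hk', hxk'⟩ := hSsep x hxB hxf
      exact ⟨k', Finset.mem_insert_of_mem hk', hxk'⟩
    · exact ⟨k, Finset.mem_insert_self k S, hcov x hx, hsep f hfB x hx hxB⟩

def shiftedCopy {α : Type*} {m : ℕ} (p : Fin m → α) (i k : ℕ) : Option α :=
  if h : i ≤ k ∧ k - i < m then some (p ⟨k - i, h.2⟩) else none

section shiftedCopy

variable {α : Type*} {m : ℕ} (p : Fin m → α)

lemma shiftedCopy_of_le_of_lt {i k : ℕ} (hik : i ≤ k) (hk : k - i < m) :
    shiftedCopy p i k = some (p ⟨k - i, hk⟩) :=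
  dif_pos ⟨hik, hk⟩

lemma shiftedCopy_ne_none_iff {i k : ℕ} : shiftedCopy p i k ≠ none ↔ i ≤ k ∧ k < i + m := by
  unfold shiftedCopy
  split_ifs with h <;> simp only [ne_eq, reduceCtorEq, not_false_eq_true, not_true_eq_false,
    true_iff, false_iff] <;> omega

lemma Aperiodic.exists_shiftedCopy_ne (hp : Aperiodic p) {a b : ℕ} (hab : a < b)
    (hba : b - a ≤ m / 2) :
    ∃ k, b ≤ k ∧ k < a + m ∧ shiftedCopy p a k ≠ shiftedCopy p b k := by
  obtain ⟨j, hj, hdj, hpj⟩ := hp (b - a) (by omega) hba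
  refine ⟨a + j, by omega, by omega, ?_⟩
  rw [shiftedCopy_of_le_of_lt p (by omega) (by omega),
    shiftedCopy_of_le_of_lt p (by omega) (by omega)]
  have ha : a + j - a = j := by omega
  have hb : a + j - b = j - (b - a) := by omega
  simpa only [ha, hb, ne_eq, Option.some.injEq] using hpj

lemma Aperiodic.exists_common_shiftedCopy_ne (hp : Aperiodic p) {B : Finset ℕ}
    (hB : B ⊆ Finset.range ((m + 1) / 2)) (hcard : 1 < B.card) :
    ∃ k, (∀ g ∈ B, shiftedCopy p g k ≠ none) ∧
      ∃ g ∈ B, ∃ h ∈ B, shiftedCopy p g k ≠ shiftedCopy p h k := by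
  have hne : B.Nonempty := Finset.card_pos.mp (by omega)
  have hmax : B.max' hne < (m + 1) / 2 := Finset.mem_range.mp (hB (B.max'_mem hne))
  have hlt := B.min'_lt_max'_of_card hcard
  obtain ⟨k, hbk, hka, hk⟩ := hp.exists_shiftedCopy_ne p hlt (by omega)
  refine ⟨k, fun g hg => ?_, _, B.min'_mem hne, _, B.max'_mem hne, hk⟩
  have := B.min'_le g hg
  have := B.le_max' g hg
  exact (shiftedCopy_ne_none_iff p).mpr ⟨by omega, by omega⟩

end shiftedCopy

/-- **Deterministic Sampling Theorem** (Vishkin). For an aperiodic pattern `p` of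
length `m ≥ 2`, among the `⌈m/2⌉` copies of `p` shifted by `0,…,⌈m/2⌉-1`, there is
a copy `f` and a set `S` of at most `⌈log₂ ⌈m/2⌉⌉` absolute positions covered by
copy `f` such that, for any text `t`, if copy `f` agrees with `t` on all of `S`,
then every other copy `g ≠ f` disagrees with `t` at some position it covers. -/
theorem deterministic_sampling {α : Type*} {m : ℕ} (hm : 2 ≤ m)
    (p : Fin m → α) (hap : Aperiodic p) :
    ∃ f < (m + 1) / 2, ∃ S : Finset ℕ,
      S.card ≤ Nat.clog 2 ((m + 1) / 2) ∧
      (∀ k ∈ S, f ≤ k ∧ k < f + m) ∧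
      ∀ t : ℕ → α,
        (∀ k ∈ S, ∀ h : k - f < m, t k = p ⟨k - f, h⟩) →
        ∀ g < (m + 1) / 2, g ≠ f →
          ∃ k, g ≤ k ∧ k < g + m ∧ ∃ h : k - g < m, t k ≠ p ⟨k - g, h⟩ := by
  obtain ⟨f, hf, S, hScard, hScov, hSsep⟩ :=
    exists_deterministic_sample (shiftedCopy p) (Finset.range ((m + 1) / 2))
      ⟨0, Finset.mem_range.mpr (by omega)⟩ (fun B hB => hap.exists_common_shiftedCopy_ne p hB)
  simp only [Finset.mem_range, Finset.card_range, shiftedCopy_ne_none_iff] at hf hScard hScov hSsep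
  refine ⟨f, hf, S, hScard, hScov, fun t ht g hg hgf => ?_⟩
  obtain ⟨k, hkS, ⟨hgk, hkg⟩, hne⟩ := hSsep g hg hgf
  obtain ⟨hfk, hkf⟩ := hScov k hkS
  refine ⟨k, hgk, hkg, by omega, fun htk => hne ?_⟩
  rw [shiftedCopy_of_le_of_lt p hgk (by omega), shiftedCopy_of_le_of_lt p hfk (by omega),
    ← htk, ht k hkS]
end

section
/- If a string p of length m is aperiodic, then p can match a text with its left endpoint at at most one position within any block of ⌈m/2⌉ consecutive text positions. -/
/-- `p` matches the text `t` with left endpoint at position `i`. -/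
def Matches {α : Type*} {m : ℕ} (p : Fin m → α) (t : ℕ → α) (i : ℕ) : Prop :=
  ∀ j : Fin m, t (i + (j : ℕ)) = p j

section

variable {α : Type*} {m : ℕ} {p : Fin m → α} {t : ℕ → α} {i d : ℕ}

theorem Matches.apply_eq_apply_sub (h₁ : Matches p t i) (h₂ : Matches p t (i + d))
    {k : ℕ} (hk : k < m) (hdk : d ≤ k) : p ⟨k, hk⟩ = p ⟨k - d, by omega⟩ := by
  rw [← h₁ ⟨k, hk⟩, ← h₂ ⟨k - d, by omega⟩]
  congr 1
  dsimp only
  omega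

theorem Aperiodic.not_matches_add (hap : Aperiodic p) (hd₀ : 1 ≤ d) (hd : d ≤ m / 2)
    (h₁ : Matches p t i) : ¬ Matches p t (i + d) := by
  intro h₂
  obtain ⟨k, hk, hdk, hne⟩ := hap d hd₀ hd
  exact hne (h₁.apply_eq_apply_sub h₂ hk hdk)

end

/-- An aperiodic pattern can match at most one position within any window of
`m/2` consecutive shifts: two occurrences at distance at most `m/2` coincide. -/
theorem aperiodic_unique_occurrence {α : Type*} {m : ℕ} (p : Fin m → α)
    (hap : Aperiodic p) (t : ℕ → α) (i₁ i₂ : ℕ)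
    (h1 : Matches p t i₁) (h2 : Matches p t i₂)
    (hd1 : i₁ - i₂ ≤ m / 2) (hd2 : i₂ - i₁ ≤ m / 2) :
    i₁ = i₂ := by
  wlog hle : i₁ ≤ i₂ generalizing i₁ i₂
  · exact (this i₂ i₁ h2 h1 hd2 hd1 (by omega)).symm
  obtain ⟨d, rfl⟩ := Nat.exists_eq_add_of_le hle
  by_contra hne
  exact hap.not_matches_add (by omega) (by omega) h1 h2
end

section
/- If p has period q (so p = v^k u with |v| = q, k ≥ 2, u a proper prefix of v, v primitive), and p matches a text t at two positions i < j with j - i ≤ m/2, then q divides j - i. -/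
theorem List.hasPeriod_ofFn_iff {α : Type*} {m : ℕ} (p : Fin m → α) (d : ℕ) :
    (List.ofFn p).HasPeriod d ↔ ∀ k, ∀ hk : k < m, d ≤ k → p ⟨k, hk⟩ = p ⟨k - d, by omega⟩ := by
  rw [List.hasPeriod_iff_getElem?, List.length_ofFn]
  constructor
  · intro h k hk hdk
    have := h (k - d) (by omega)
    simp only [Nat.sub_add_cancel hdk, List.getElem?_ofFn, hk, show k - d < m by omega,
      dite_true, Option.some.injEq] at this
    exact this.symm
  · intro h k hk
    simp [show k < m by omega, show k + d < m by omega, h (k + d)]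

theorem Matches.hasPeriod_sub {α : Type*} {m : ℕ} {p : Fin m → α} {t : ℕ → α} {i j : ℕ}
    (hi : Matches p t i) (hj : Matches p t j) (hij : i ≤ j) :
    (List.ofFn p).HasPeriod (j - i) := by
  rw [List.hasPeriod_ofFn_iff]
  intro k hk hdk
  rw [← hi, ← hj]
  congr 1
  simp only
  omega

/-- Period-divisibility: if `p` has least period `q ≤ m/2` and `p` matches the
text at two positions `i < j` with `j - i ≤ m/2`, then `q` divides `j - i`. -/
theorem period_divides_shift {α : Type*} {m : ℕ} (p : Fin m → α) (q : ℕ)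
    (hq1 : 1 ≤ q) (hq2 : q ≤ m / 2)
    (hper : ∀ k, ∀ hk : k < m, q ≤ k → ∀ h : k - q < m, p ⟨k, hk⟩ = p ⟨k - q, h⟩)
    (hleast : ∀ d, 1 ≤ d → d < q →
      ∃ k, ∃ hk : k < m, d ≤ k ∧ p ⟨k, hk⟩ ≠ p ⟨k - d, by omega⟩)
    (t : ℕ → α) (i j : ℕ) (hi : Matches p t i) (hj : Matches p t j)
    (hij : i < j) (hdist : j - i ≤ m / 2) :
    q ∣ (j - i) := by
  have hq : (List.ofFn p).HasPeriod q :=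
    (List.hasPeriod_ofFn_iff p q).mpr fun k hk hqk => hper k hk hqk (by omega)
  have hg : (List.ofFn p).HasPeriod (q.gcd (j - i)) :=
    hq.gcd (hi.hasPeriod_sub hj hij.le) (by rw [List.length_ofFn]; omega)
  have hgq : q.gcd (j - i) = q := by
    by_contra hne
    obtain ⟨k, hk, hgk, hne'⟩ := hleast _ (Nat.gcd_pos_of_pos_left _ hq1)
      (lt_of_le_of_ne (Nat.gcd_le_left _ hq1) hne)
    exact hne' ((List.hasPeriod_ofFn_iff p _).mp hg k hk hgk)
  exact hgq ▸ Nat.gcd_dvd_right q (j - i)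
end

section
/- Existence of a stabbing heterogeneous column: if C is a set of at least two shifted copies of an aperiodic pattern p of length m, all with shifts in [0, m/2], then there exists an absolute position covered by every copy in C at which not all copies of C have the same character. -/
/-! Two copies of `p` with shifts `a < b`, `b - a ≤ m / 2`, disagree somewhere on their overlap
`[b, a + m)`, by aperiodicity with period `b - a`. Taking for `a` and `b` the extreme shifts of `C`,
that overlap is covered by every copy in `C`. -/

theorem Aperiodic.exists_ne_on_overlap {α : Type*} {m : ℕ} {p : Fin m → α} (hap : Aperiodic p)
    {a b : ℕ} (hab : a < b) (hba : b - a ≤ m / 2) :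
    ∃ j, b ≤ j ∧ j < a + m ∧
      ∃ (h : j - a < m) (h' : j - b < m), p ⟨j - a, h⟩ ≠ p ⟨j - b, h'⟩ := by
  obtain ⟨k, hk, hdk, hne⟩ := hap (b - a) (by omega) hba
  have hka : a + k - a = k := by omega
  have hkb : a + k - b = k - (b - a) := by omega
  exact ⟨a + k, by omega, by omega, by omega, by omega, by simpa only [hka, hkb] using hne⟩

/-- Existence of a stabbing heterogeneous column: given at least two shifted
copies of an aperiodic pattern `p` (all shifts in `[0, m/2]`), there is an
absolute position covered by every copy where not all copies agree. -/
theorem exists_stabbing_heterogeneous_column {α : Type*} {m : ℕ}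
    (p : Fin m → α) (hap : Aperiodic p) (C : Finset ℕ)
    (hcard : 2 ≤ C.card) (hsh : ∀ s ∈ C, s ≤ m / 2) :
    ∃ j, (∀ s ∈ C, s ≤ j ∧ j < s + m) ∧
      ∃ s ∈ C, ∃ s' ∈ C, ∃ (h : j - s < m) (h' : j - s' < m),
        p ⟨j - s, h⟩ ≠ p ⟨j - s', h'⟩ := by
  have hC : C.Nonempty := Finset.card_pos.mp (by omega)
  have hlt : C.min' hC < C.max' hC := C.min'_lt_max'_of_card (by omega)
  have hmax := hsh _ (C.max'_mem hC)
  obtain ⟨j, hmaxj, hjmin, h, h', hne⟩ := hap.exists_ne_on_overlap hlt (by omega)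
  refine ⟨j, fun s hs => ?_, _, C.min'_mem hC, _, C.max'_mem hC, h, h', hne⟩
  have := C.min'_le s hs
  have := C.le_max' s hs
  omega
end

section
/- The leftmost and rightmost copies suffice to find heterogeneity: if C is a set of shifted copies of a string p (shifts in [0, m/2]) and the copy with minimum shift and the copy with maximum shift differ at some commonly covered column, then that column witnesses that not all copies in C agree there; conversely if the min-shift and max-shift copies agree on all common columns and p is aperiodic with max shift > min shift, a contradiction follows. -/
theorem eq_sub_of_copies_agree {α : Type*} {m : ℕ} (p : Fin m → α) {a b : ℕ} (hab : a ≤ b)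
    (hagree : ∀ j, b ≤ j → j < a + m → ∀ (h1 : j - a < m) (h2 : j - b < m),
      p ⟨j - a, h1⟩ = p ⟨j - b, h2⟩)
    {k : ℕ} (hk : k < m) (hdk : b - a ≤ k) :
    p ⟨k, hk⟩ = p ⟨k - (b - a), by omega⟩ := by
  -- column `k + a` carries `p k` in the copy at `a` and `p (k - (b - a))` in the copy at `b`
  have h := hagree (k + a) (by omega) (by omega) (by omega) (by omega)
  simp only [Nat.add_sub_cancel] at h
  convert h using 3
  omega

theorem Aperiodic.not_copies_agree {α : Type*} {m : ℕ} {p : Fin m → α} (hp : Aperiodic p)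
    {a b : ℕ} (hab : a < b) (hba : b - a ≤ m / 2) :
    ¬ ∀ j, b ≤ j → j < a + m → ∀ (h1 : j - a < m) (h2 : j - b < m),
      p ⟨j - a, h1⟩ = p ⟨j - b, h2⟩ := by
  intro hagree
  obtain ⟨k, hk, hdk, hne⟩ := hp (b - a) (by omega) hba
  exact hne (eq_sub_of_copies_agree p hab.le hagree hk hdk)

/-- The leftmost (min shift `a`) and rightmost (max shift `b`) copies suffice:
(1) if they differ at a commonly covered column `j`, then not all copies in `C`
agree at `j`; (2) if they agree on all commonly covered columns and `p` is
aperiodic (with `a < b`), we get a contradiction. -/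
theorem minmax_copies_suffice {α : Type*} {m : ℕ} (p : Fin m → α)
    (C : Finset ℕ) (hcard : 2 ≤ C.card) (hsh : ∀ s ∈ C, s ≤ m / 2)
    (a b : ℕ) (ha : a = C.min' (Finset.card_pos.mp (by omega)))
    (hb : b = C.max' (Finset.card_pos.mp (by omega))) :
    ((∀ j, b ≤ j → j < a + m →
        (∃ (h1 : j - a < m) (h2 : j - b < m), p ⟨j - a, h1⟩ ≠ p ⟨j - b, h2⟩) →
        ¬ (∀ s ∈ C, ∀ s' ∈ C, ∀ (h : j - s < m) (h' : j - s' < m),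
            p ⟨j - s, h⟩ = p ⟨j - s', h'⟩)) ∧
     (Aperiodic p →
       (∀ j, b ≤ j → j < a + m → ∀ (h1 : j - a < m) (h2 : j - b < m),
          p ⟨j - a, h1⟩ = p ⟨j - b, h2⟩) → False)) := by
  have hC : C.Nonempty := Finset.card_pos.mp (by omega)
  have haC : a ∈ C := ha ▸ C.min'_mem hC
  have hbC : b ∈ C := hb ▸ C.max'_mem hC
  have hab : a < b := ha ▸ hb ▸ C.min'_lt_max'_of_card hcard
  refine ⟨fun j _ _ ⟨h1, h2, hne⟩ hall ↦ hne (hall a haC b hbC h1 h2), fun hp ↦ ?_⟩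
  exact hp.not_copies_agree hab ((Nat.sub_le b a).trans (hsh b hbC))
end
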